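/- The convex conjugate of φ(x) = (1/2)(x−1)²/x (defined as +∞ for x ≤ 0) is φ*(t) = 1 − √(1−2t) for t ≤ 1/2 and φ*(t) = +∞ for t > 1/2. -/
import Mathlib

/-- The modified χ² divergence function:
`φ(x) = (x−1)²/(2x)` for `x > 0`, `+∞` for `x ≤ 0`. -/
noncomputable def phiChi2m : ℝ → EReal := fun x =>
  if 0 < x then (((x - 1) ^ 2 / (2 * x) : ℝ) : EReal) else ⊤

/-- The Fenchel–Legendre conjugate `φ*(t) = sup_x (t·x − φ(x))`. -/
noncomputable def phiChi2mStar : ℝ → EReal := fun t =>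
  ⨆ x : ℝ, (((t * x : ℝ) : EReal) - phiChi2m x)

theorem conjugate_of_chi2m_divergence_function :
    ∀ t : ℝ, (t ≤ 1 / 2 → phiChi2mStar t = ((1 - Real.sqrt (1 - 2 * t) : ℝ) : EReal)) ∧
      (1 / 2 < t → phiChi2mStar t = ⊤) := by
  intro t
  have hFle : ∀ x : ℝ, x ≤ 0 → (((t * x : ℝ) : EReal) - phiChi2m x) = ⊥ := by
    intro x hx
    simp [phiChi2m, not_lt.mpr hx, EReal.sub_top]
  have hFpos : ∀ x : ℝ, 0 < x →
      (((t * x : ℝ) : EReal) - phiChi2m x) = ((t * x - (x - 1) ^ 2 / (2 * x) : ℝ) : EReal) := by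
    intro x hx
    simp [phiChi2m, hx]
  constructor
  · intro ht
    set s := Real.sqrt (1 - 2 * t) with hs
    have hs0 : 0 ≤ s := Real.sqrt_nonneg _
    have hs2 : s ^ 2 = 1 - 2 * t := Real.sq_sqrt (by linarith)
    apply le_antisymm
    · apply iSup_le
      intro x
      rcases le_or_gt x 0 with hx | hx
      · rw [hFle x hx]; exact bot_le
      · rw [hFpos x hx]
        have h2x : (0:ℝ) < 2 * x := by linarith
        have key : (t * x - (1 - s)) * (2 * x) ≤ (x - 1) ^ 2 := by
          nlinarith [sq_nonneg (s * x - 1)]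
        have key2 : t * x - (1 - s) ≤ (x - 1) ^ 2 / (2 * x) :=
          (le_div_iff₀ h2x).mpr key
        exact EReal.coe_le_coe_iff.mpr (by linarith)
    · rcases lt_or_eq_of_le ht with ht' | ht'
      · -- t < 1/2, attained at x = 1/s
        have hspos : 0 < s := Real.sqrt_pos.mpr (by linarith)
        have hxpos : (0:ℝ) < 1 / s := by positivity
        have hval : t * (1 / s) - (1 / s - 1) ^ 2 / (2 * (1 / s)) = 1 - s := by
          have ht2 : t = (1 - s ^ 2) / 2 := by linarith
          rw [ht2]; field_simp; ring
        refine le_iSup_of_le (1 / s) ?_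
        rw [hFpos _ hxpos, hval]
      · -- t = 1/2, sup approached as x → ∞
        have hs0' : s = 0 := by rw [hs, show 1 - 2 * t = 0 by linarith, Real.sqrt_zero]
        refine EReal.ge_of_forall_gt_iff_ge.mp ?_
        intro z hz
        have hz1 : z < 1 := by
          have := EReal.coe_lt_coe_iff.mp hz
          rw [hs0'] at this; linarith
        have hz' : (0:ℝ) < 1 - z := by linarith
        set x := max 1 (1 / (1 - z)) with hxdef
        have hx1 : (1:ℝ) ≤ x := le_max_left _ _
        have hxpos : (0:ℝ) < x := by linarith
        have hx2 : 1 / (1 - z) ≤ x := le_max_right _ _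
        have hzx : 1 ≤ x * (1 - z) := (div_le_iff₀ hz').mp hx2
        have h2x : (0:ℝ) < 2 * x := by linarith
        have key : (x - 1) ^ 2 ≤ (t * x - z) * (2 * x) := by nlinarith
        have key2 : (x - 1) ^ 2 / (2 * x) ≤ t * x - z := (div_le_iff₀ h2x).mpr key
        refine le_iSup_of_le x ?_
        rw [hFpos _ hxpos]
        exact EReal.coe_le_coe_iff.mpr (by linarith)
  · intro ht
    rw [phiChi2mStar, EReal.eq_top_iff_forall_lt]
    intro y
    have htp : (0:ℝ) < t - 1 / 2 := by linarith
    set x := max 1 ((y + 1) / (t - 1 / 2)) with hxdef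
    have hx1 : (1:ℝ) ≤ x := le_max_left _ _
    have hxpos : (0:ℝ) < x := by linarith
    have hx2 : (y + 1) / (t - 1 / 2) ≤ x := le_max_right _ _
    have hyx : y + 1 ≤ x * (t - 1 / 2) := (div_le_iff₀ htp).mp hx2
    have h2x : (0:ℝ) < 2 * x := by linarith
    have key : (x - 1) ^ 2 ≤ (t * x - y - 1 / 2) * (2 * x) := by nlinarith
    have key2 : (x - 1) ^ 2 / (2 * x) ≤ t * x - y - 1 / 2 := (div_le_iff₀ h2x).mpr key
    refine lt_of_lt_of_le ?_ (le_iSup _ x)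
    rw [hFpos _ hxpos]
    exact EReal.coe_lt_coe_iff.mpr (by linarith)
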